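/- Let (R_i, t_i) be a purely inseparable tower arising from (R_0, I_0). Let j ≥ 0 and let J be a finitely generated ideal of R_j^{s♭} such that J^k ⊆ ker Φ^{(j)}_0 for some k > 0. Then R_j^{s♭} is J-adically complete and separated, i.e., the canonical map R_j^{s♭} → lim_n R_j^{s♭}/J^n is bijective. -/

import Mathlib

set_option synthInstance.maxHeartbeats 1000000
set_option maxHeartbeats 1000000
universe u

namespace PaperTower

variable {R : ℕ → Type u} [∀ i, CommRing (R i)]

/-- The set of `J`-torsion elements of a commutative ring. -/
def torSet {A : Type*} [CommRing A] (J : Ideal A) : Set A :=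
  {x | ∀ a ∈ J, ∃ n : ℕ, 0 < n ∧ a ^ n * x = 0}

/-- Cast ring homomorphism between quotients at equal indices. -/
def qcast (I : ∀ i, Ideal (R i)) {m n : ℕ} (h : m = n) :
    (R m ⧸ I m) →+* (R n ⧸ I n) := by subst h; exact RingHom.id _

/-- The `j`-th small tilt (inverse quasi-perfection) of a tower, as a subring of the
product of the quotients, consisting of sequences compatible with the Frobenius
projections `F`. -/
def Tilt (I : ∀ i, Ideal (R i))
    (F : ∀ i, (R (i + 1) ⧸ I (i + 1)) →+* (R i ⧸ I i)) (j : ℕ) :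
    Subring (∀ i, R (j + i) ⧸ I (j + i)) where
  carrier := {a | ∀ i, F (j + i) (a (i + 1)) = a i}
  zero_mem' := by
    intro i
    show F (j + i) 0 = 0
    simp
  one_mem' := by
    intro i
    show F (j + i) 1 = 1
    simp
  add_mem' := by
    intro a b ha hb i
    show F (j + i) (a (i + 1) + b (i + 1)) = a i + b i
    rw [map_add, ha i, hb i]
  mul_mem' := by
    intro a b ha hb i
    show F (j + i) (a (i + 1) * b (i + 1)) = a i * b i
    rw [map_mul, ha i, hb i]
  neg_mem' := by
    intro a ha i
    show F (j + i) (-(a (i + 1))) = -(a i)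
    rw [map_neg, ha i]

/-- The `m`-th projection `Φ^{(j)}_m` from the `j`-th small tilt. -/
def proj (I : ∀ i, Ideal (R i))
    (F : ∀ i, (R (i + 1) ⧸ I (i + 1)) →+* (R i ⧸ I i)) (j m : ℕ) :
    Tilt I F j →+* (R (j + m) ⧸ I (j + m)) :=
  (Pi.evalRingHom _ m).comp (Tilt I F j).subtype

section Aux

variable (I : ∀ i, Ideal (R i)) (F : ∀ i, (R (i + 1) ⧸ I (i + 1)) →+* (R i ⧸ I i)) (j : ℕ)

theorem mem_Tilt_iff {a : ∀ i, R (j + i) ⧸ I (j + i)} :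
    a ∈ Tilt I F j ↔ ∀ i, F (j + i) (a (i + 1)) = a i := Iff.rfl

theorem mem_proj_ker_iff {m : ℕ} {a : Tilt I F j} :
    a ∈ RingHom.ker (proj I F j m) ↔ (a : ∀ i, R (j + i) ⧸ I (j + i)) m = 0 :=
  RingHom.mem_ker

theorem coe_sub_apply (a b : Tilt I F j) (m : ℕ) :
    ((a - b : Tilt I F j) : ∀ i, R (j + i) ⧸ I (j + i)) m
      = (a : ∀ i, R (j + i) ⧸ I (j + i)) m - (b : ∀ i, R (j + i) ⧸ I (j + i)) m := rfl

theorem coe_pow_apply (a : Tilt I F j) (e m : ℕ) :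
    ((a ^ e : Tilt I F j) : ∀ i, R (j + i) ⧸ I (j + i)) m
      = ((a : ∀ i, R (j + i) ⧸ I (j + i)) m) ^ e := by
  induction e with
  | zero => rfl
  | succ e ih =>
    rw [pow_succ, pow_succ, ← ih]
    rfl

/-- Convergence with respect to the filtration by kernels of the projections. -/
def Cv (g : ℕ → Tilt I F j) (L : Tilt I F j) : Prop :=
  ∀ m, ∃ n₀, ∀ n, n₀ ≤ n → L - g n ∈ RingHom.ker (proj I F j m)

theorem Cv_unique {g : ℕ → Tilt I F j} {L L' : Tilt I F j}
    (h : Cv I F j g L) (h' : Cv I F j g L') : L = L' := by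
  apply Subtype.ext; funext m
  obtain ⟨n₁, h₁⟩ := h m
  obtain ⟨n₂, h₂⟩ := h' m
  have e1 := (mem_proj_ker_iff I F j).mp (h₁ (max n₁ n₂) (le_max_left _ _))
  have e2 := (mem_proj_ker_iff I F j).mp (h₂ (max n₁ n₂) (le_max_right _ _))
  rw [coe_sub_apply, sub_eq_zero] at e1 e2
  exact e1.trans e2.symm

theorem Cv_exists (g : ℕ → Tilt I F j)
    (hg : ∀ m, ∃ n₀, ∀ n n', n₀ ≤ n → n ≤ n' →
      g n' - g n ∈ RingHom.ker (proj I F j m)) :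
    ∃ L, Cv I F j g L := by
  classical
  choose ν hν using hg
  set μ : ℕ → ℕ := fun m => (Finset.range (m + 1)).sup ν with hμ
  have hνμ : ∀ m, ν m ≤ μ m := fun m => Finset.le_sup (Finset.self_mem_range_succ m)
  have hmono : ∀ {m n : ℕ}, m ≤ n → μ m ≤ μ n := fun {m n} h =>
    Finset.sup_mono (Finset.range_subset_range.mpr (by omega))
  have key : ∀ m n, μ m ≤ n →
      (g n : ∀ i, R (j + i) ⧸ I (j + i)) m = (g (μ m) : ∀ i, R (j + i) ⧸ I (j + i)) m := by
    intro m n hn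
    have h2 := (mem_proj_ker_iff I F j).mp (hν m (μ m) n (hνμ m) hn)
    rw [coe_sub_apply, sub_eq_zero] at h2
    exact h2
  refine ⟨⟨fun i => (g (μ i) : ∀ i', R (j + i') ⧸ I (j + i')) i, ?_⟩, ?_⟩
  · rw [mem_Tilt_iff]
    intro i
    have hmem := (mem_Tilt_iff I F j).mp (g (μ (i + 1))).2 i
    show F (j + i) ((g (μ (i + 1)) : ∀ i', R (j + i') ⧸ I (j + i')) (i + 1))
        = (g (μ i) : ∀ i', R (j + i') ⧸ I (j + i')) i
    rw [hmem]
    exact key i (μ (i + 1)) (hmono (Nat.le_succ i))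
  · intro m
    refine ⟨μ m, fun n hn => ?_⟩
    rw [mem_proj_ker_iff, coe_sub_apply, sub_eq_zero]
    exact (key m n hn).symm
















theorem Cv_mul_left (cst : Tilt I F j) {g : ℕ → Tilt I F j} {L : Tilt I F j}
    (h : Cv I F j g L) : Cv I F j (fun i => cst * g i) (cst * L) := by
  intro m
  obtain ⟨n₀, h₀⟩ := h m
  refine ⟨n₀, fun i hi => ?_⟩
  have e : cst * L - cst * g i = cst * (L - g i) := by ring
  rw [e]
  exact Ideal.mul_mem_left _ _ (h₀ i hi)

theorem Cv_sum {α : Type*} [DecidableEq α] (T : Finset α)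
    (g : α → ℕ → Tilt I F j) (L : α → Tilt I F j) :
    (∀ s ∈ T, Cv I F j (g s) (L s)) →
      Cv I F j (fun i => ∑ s ∈ T, g s i) (∑ s ∈ T, L s) := by
  induction T using Finset.induction_on with
  | empty =>
    intro _ m
    refine ⟨0, fun i _ => ?_⟩
    simp only [Finset.sum_empty, sub_zero]
    exact zero_mem _
  | @insert a T ha ih =>
    intro h m
    obtain ⟨n₁, h₁⟩ := h a (Finset.mem_insert_self a T) m
    obtain ⟨n₂, h₂⟩ := ih (fun s hs => h s (Finset.mem_insert_of_mem hs)) m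
    refine ⟨max n₁ n₂, fun i hi => ?_⟩
    simp only [Finset.sum_insert ha]
    have e : (L a + ∑ s ∈ T, L s) - (g a i + ∑ s ∈ T, g s i)
        = (L a - g a i) + ((∑ s ∈ T, L s) - ∑ s ∈ T, g s i) := by ring
    rw [e]
    exact add_mem (h₁ i (le_trans (le_max_left _ _) hi))
      (h₂ i (le_trans (le_max_right _ _) hi))

theorem decomp (T : Finset (Tilt I F j)) (B : Ideal (Tilt I F j)) (z : Tilt I F j)
    (hz : z ∈ Ideal.span (↑T : Set (Tilt I F j)) * B) :
    ∃ c : Tilt I F j → Tilt I F j, (∀ s, c s ∈ B) ∧ z = ∑ s ∈ T, s * c s := by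
  classical
  refine Submodule.mul_induction_on hz ?_ ?_
  · intro a ha b hb
    obtain ⟨f, -, hf⟩ := Submodule.mem_span_finset.mp ha
    refine ⟨fun s => f s * b, fun s => Ideal.mul_mem_left _ _ hb, ?_⟩
    rw [← hf, Finset.sum_mul]
    apply Finset.sum_congr rfl
    intro s _
    rw [smul_eq_mul]; ring
  · rintro x y ⟨c₁, hc₁, rfl⟩ ⟨c₂, hc₂, rfl⟩
    refine ⟨fun s => c₁ s + c₂ s, fun s => add_mem (hc₁ s) (hc₂ s), ?_⟩
    rw [← Finset.sum_add_distrib]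
    apply Finset.sum_congr rfl
    intro s _
    ring

end Aux

/-- If `J` is a finitely generated ideal of the `j`-th small tilt
`R_j^{s♭}` of a purely inseparable tower with `J ^ k ⊆ ker Φ^{(j)}_0` for some `k > 0`,
then `R_j^{s♭}` is `J`-adically complete and separated. -/
theorem stmt8 (p : ℕ) (hp : p.Prime)
    (R : ℕ → Type u) [∀ i, CommRing (R i)]
    (t : ∀ i, R i →+* R (i + 1))
    (I : ∀ i, Ideal (R i))
    (hpI : (p : R 0) ∈ I 0)
    (hIsucc : ∀ i, I (i + 1) = (I i).map (t i))
    (tbar : ∀ i, (R i ⧸ I i) →+* (R (i + 1) ⧸ I (i + 1)))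
    (htbar : ∀ i (x : R i),
      tbar i (Ideal.Quotient.mk (I i) x) = Ideal.Quotient.mk (I (i + 1)) (t i x))
    (htbarInj : ∀ i, Function.Injective (tbar i))
    (F : ∀ i, (R (i + 1) ⧸ I (i + 1)) →+* (R i ⧸ I i))
    (hF : ∀ i (x : R (i + 1) ⧸ I (i + 1)), tbar i (F i x) = x ^ p)
    (j : ℕ) (J : Ideal (Tilt I F j)) (hJfg : J.FG)
    (hJk : ∃ k : ℕ, 0 < k ∧ J ^ k ≤ RingHom.ker (proj I F j 0)) :
    IsAdicComplete J (Tilt I F j) := by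
  classical
  obtain ⟨k, hkpos, hJkK⟩ := hJk
  -- elementwise Frobenius descent into deeper kernels
  have hstep : ∀ (m : ℕ) (a : Tilt I F j),
      a ∈ RingHom.ker (proj I F j m) → a ^ p ∈ RingHom.ker (proj I F j (m + 1)) := by
    intro m a ha
    rw [mem_proj_ker_iff] at ha ⊢
    rw [coe_pow_apply]
    have h1 := hF (j + m) ((a : ∀ i, R (j + i) ⧸ I (j + i)) (m + 1))
    have h2 := (mem_Tilt_iff I F j).mp a.2 m
    rw [h2] at h1
    rw [← h1, ha, map_zero]
  have hpowm : ∀ (m : ℕ) (a : Tilt I F j),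
      a ∈ RingHom.ker (proj I F j 0) → a ^ (p ^ m) ∈ RingHom.ker (proj I F j m) := by
    intro m
    induction m with
    | zero => intro a ha; simpa using ha
    | succ m ih =>
      intro a ha
      have : a ^ p ^ (m + 1) = (a ^ p ^ m) ^ p := by
        rw [← pow_mul, pow_succ]
      rw [this]
      exact hstep m _ (ih a ha)
  -- powers of J are eventually inside every kernel
  have hνex : ∀ m, ∃ c, J ^ c ≤ RingHom.ker (proj I F j m) := by
    intro m
    apply Ideal.exists_pow_le_of_le_radical_of_fg _ hJfg
    intro x hx
    refine ⟨k * p ^ m, ?_⟩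
    rw [pow_mul]
    exact hpowm m (x ^ k) (hJkK (Ideal.pow_mem_pow hx k))
  choose ν hν using hνex
  have hJK : ∀ m n, ν m ≤ n → J ^ n ≤ RingHom.ker (proj I F j m) :=
    fun m n h => (Ideal.pow_le_pow_right h).trans (hν m)
  have hsmul : ∀ n : ℕ, (J ^ n • ⊤ : Submodule (Tilt I F j) (Tilt I F j)) = J ^ n :=
    fun n => by rw [smul_eq_mul, Ideal.mul_top]
  refine { toIsHausdorff := ⟨?_⟩, toIsPrecomplete := ⟨?_⟩ }
  · -- Hausdorff
    intro x hx
    have hx' : ∀ m, x ∈ RingHom.ker (proj I F j m) := by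
      intro m
      apply hJK m (ν m) le_rfl
      have := (SModEq.zero).mp (hx (ν m))
      rwa [hsmul] at this
    apply Subtype.ext; funext m
    exact (mem_proj_ker_iff I F j).mp (hx' m)
  · -- Precomplete
    intro f hf
    have hf' : ∀ m n, m ≤ n → f n - f m ∈ J ^ m := by
      intro m n h
      have h1 := (SModEq.sub_mem).mp (hf h)
      rw [hsmul] at h1
      have := (J ^ m).neg_mem h1
      rwa [neg_sub] at this
    obtain ⟨L, hL⟩ := Cv_exists I F j f
      (fun m => ⟨ν m, fun n n' hn hnn' => hJK m n hn (hf' n n' hnn')⟩)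
    refine ⟨L, fun n => ?_⟩
    rw [SModEq.sub_mem, hsmul]
    -- goal : f n - L ∈ J ^ n
    obtain ⟨T, hT⟩ := Submodule.FG.pow hJfg n
    have hdiff : ∀ i : ℕ,
        f (n + i + 1) - f (n + i) ∈ Ideal.span (↑T : Set (Tilt I F j)) * J ^ i := by
      intro i
      have h1 : f (n + i + 1) - f (n + i) ∈ J ^ (n + i) :=
        hf' (n + i) (n + i + 1) (Nat.le_succ _)
      rwa [pow_add, ← hT] at h1
    choose c hc1 hc2 using fun i => decomp I F j T (J ^ i) _ (hdiff i)
    set D : Tilt I F j → ℕ → Tilt I F j :=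
      fun s i => ∑ u ∈ Finset.range i, c u s with hD
    have hyD : ∀ i, f (n + i) - f n = ∑ s ∈ T, s * D s i := by
      intro i
      induction i with
      | zero => simp [hD]
      | succ i ih =>
        have e : f (n + (i + 1)) - f n
            = (f (n + i) - f n) + (f (n + i + 1) - f (n + i)) := by
          have : n + (i + 1) = n + i + 1 := rfl
          rw [this]; ring
        rw [e, ih, hc2 i, ← Finset.sum_add_distrib]
        apply Finset.sum_congr rfl
        intro s _
        rw [hD]
        simp only [Finset.sum_range_succ, mul_add]
    have hDc : ∀ s, ∃ Cs, Cv I F j (D s) Cs := by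
      intro s
      apply Cv_exists
      intro m
      refine ⟨ν m, fun i i' hi hii' => hJK m i hi ?_⟩
      have e : D s i' - D s i = ∑ u ∈ Finset.Ico i i', c u s := by
        rw [hD, Finset.sum_Ico_eq_sub _ hii']
      rw [e]
      apply Ideal.sum_mem
      intro u hu
      exact Ideal.pow_le_pow_right (Finset.mem_Ico.mp hu).1 (hc1 u s)
    choose C hC using hDc
    have h1 : Cv I F j (fun i => f (n + i) - f n) (L - f n) := by
      intro m
      obtain ⟨n₀, h⟩ := hL m
      refine ⟨n₀, fun i hi => ?_⟩
      have e : (L - f n) - (f (n + i) - f n) = L - f (n + i) := by ring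
      rw [e]
      exact h (n + i) (le_trans hi (Nat.le_add_left i n))
    have h2 : Cv I F j (fun i => f (n + i) - f n) (∑ s ∈ T, s * C s) := by
      have h3 := Cv_sum I F j T (fun s i => s * D s i) (fun s => s * C s)
        (fun s _ => Cv_mul_left I F j s (hC s))
      have e : (fun i => ∑ s ∈ T, s * D s i) = (fun i => f (n + i) - f n) :=
        funext fun i => (hyD i).symm
      rwa [e] at h3
    have hEq : L - f n = ∑ s ∈ T, s * C s := Cv_unique I F j h1 h2
    have hmem : (∑ s ∈ T, s * C s) ∈ J ^ n := by
      apply Ideal.sum_mem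
      intro s hs
      have hsJ : s ∈ J ^ n := hT ▸ Ideal.subset_span hs
      exact Ideal.mul_mem_right _ _ hsJ
    rw [← hEq] at hmem
    have := (J ^ n).neg_mem hmem
    rwa [neg_sub] at this

end PaperTower
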